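/- Signature restriction via active positions: if Σ is a winning strategy of P in G(t), u ∈ Σ, and j is a P-losing number, then the prefix s(u,Σ)↾j of the signature up to coordinate j equals the lexicographic supremum over all w ∈ act_u(Σ,j) of s(w,Σ)↾j, where act_u(Σ,j) is the set of active positions w ⪰ u whose priority label is at most j. -/
import Mathlib


namespace UnambSig

/-- The symbols of the alphabet `A^~_{i,k}`: unary priority symbols `p j`,
binary choice symbols of the two players (`true` is player 1), and the unary
player-swapping symbol `~`. -/
inductive Sym where
  | pri : ℕ → Sym
  | choice : Bool → Sym
  | neg : Sym
deriving DecidableEq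

/-- Arity of a symbol. -/
def Sym.arity : Sym → ℕ
  | .pri _ => 1
  | .choice _ => 2
  | .neg => 1

/-- A labelling of potential tree nodes (lists of directions, from the root). -/
abbrev Label := List ℕ → Option Sym

/-- `t` is a tree over the alphabet `A^~_{i,k}`: the root is defined, children
match arities, the domain is closed and priorities are within `{i,…,k}`. -/
def IsTree (t : Label) (i k : ℕ) : Prop :=
  t [] ≠ none ∧
  (∀ u s, t u = some s → ∀ d : ℕ, (t (u ++ [d]) ≠ none ↔ d < s.arity)) ∧
  (∀ u (d : ℕ), t u = none → t (u ++ [d]) = none) ∧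
  (∀ u j, t u = some (Sym.pri j) → i ≤ j ∧ j ≤ k)

/-- The number of strict ancestors of `u` labelled by `~`. -/
def tildeCount (t : Label) (u : List ℕ) : ℕ :=
  (List.range u.length).countP (fun m => decide (t (u.take m) = some Sym.neg))

/-- A node is kept if it has an even number of `~`-labelled strict ancestors. -/
def kept (t : Label) (u : List ℕ) : Prop := tildeCount t u % 2 = 0

instance (t : Label) (u : List ℕ) : Decidable (kept t u) := by
  unfold kept; infer_instance

/-- The node of a branch `α` at depth `n`. -/
def pref (α : ℕ → ℕ) (n : ℕ) : List ℕ := (List.range n).map α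

/-- `α` is an infinite branch of `t`. -/
def IsBranch (t : Label) (α : ℕ → ℕ) : Prop := ∀ n, t (pref α n) ≠ none

/-- `t` is well-formed: no branch contains infinitely many `~`. -/
def WellFormed (t : Label) : Prop :=
  ∀ α : ℕ → ℕ, IsBranch t α → {n : ℕ | t (pref α n) = some Sym.neg}.Finite

/-- `t` is a well-formed tree over `A^~_{i,k}`. -/
def GoodTree (t : Label) (i k : ℕ) : Prop := IsTree t i k ∧ WellFormed t

/-- The effective priority of a node: the labelled priority, shifted by one at
switched nodes (each `~` swaps the players). -/
def effPri (t : Label) (u : List ℕ) : Option ℕ :=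
  match t u with
  | some (Sym.pri j) => some (if kept t u then j else j + 1)
  | _ => none

/-- The player controlling a node: the player named by the choice symbol,
swapped if the node is switched. -/
def ctrl (t : Label) (u : List ℕ) : Option Bool :=
  match t u with
  | some (Sym.choice Q) => some (if kept t u then Q else !Q)
  | _ => none

/-- The effective priority `j` appears infinitely often on the branch `α`. -/
def InfOften (t : Label) (α : ℕ → ℕ) (j : ℕ) : Prop :=
  {n : ℕ | effPri t (pref α n) = some j}.Infinite

/-- The branch `α` is winning for player `P` in the game `G(t)`: the least
effective priority occurring infinitely often has the parity favourable to `P`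
(even for player 1 = `true`). -/
def WinsBranch (t : Label) (P : Bool) (α : ℕ → ℕ) : Prop :=
  ∃ j, InfOften t α j ∧ (∀ j' < j, ¬ InfOften t α j') ∧ (Even j ↔ P = true)

/-- A strategy of player `P` in `G(t)`, identified (since the arena is a tree)
with a prefix-closed set of nodes: deterministic at `P`'s positions and full at
the other positions. -/
def IsStrategy (t : Label) (P : Bool) (S : List ℕ → Prop) : Prop :=
  S [] ∧
  (∀ u, S u → t u ≠ none) ∧
  (∀ u (d : ℕ), S (u ++ [d]) → S u) ∧
  (∀ u, S u → ctrl t u = some P → ∃! d : ℕ, S (u ++ [d])) ∧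
  (∀ u (d : ℕ), S u → ctrl t u ≠ some P → t (u ++ [d]) ≠ none → S (u ++ [d]))

/-- An infinite play of `S`: a branch all of whose prefixes belong to `S`. -/
def IsPlayOf (S : List ℕ → Prop) (α : ℕ → ℕ) : Prop := ∀ n, S (pref α n)

/-- A winning strategy of `P`: all its infinite plays are winning for `P`. -/
def IsWinningStrategy (t : Label) (P : Bool) (S : List ℕ → Prop) : Prop :=
  IsStrategy t P S ∧ ∀ α, IsPlayOf S α → WinsBranch t P α

/-- `j` is a `P`-losing priority: within `{i,…,k}` and of the parity
unfavourable to `P` (odd for player 1 = `true`). -/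
def PLosing (i k : ℕ) (P : Bool) (j : ℕ) : Prop :=
  i ≤ j ∧ j ≤ k ∧ (Odd j ↔ P = true)

/-- `j` is a `P`-winning priority. -/
def PWinning (i k : ℕ) (P : Bool) (j : ℕ) : Prop :=
  i ≤ j ∧ j ≤ k ∧ ¬ (Odd j ↔ P = true)

/-- A position `u` of the strategy `S` is active: it carries a `P`-losing
priority `j` and no strict ancestor is labelled `~` or by a smaller priority. -/
def Active (t : Label) (i k : ℕ) (P : Bool) (S : List ℕ → Prop) (u : List ℕ) : Prop :=
  S u ∧ ∃ j, t u = some (Sym.pri j) ∧ PLosing i k P j ∧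
    ∀ w, w <+: u → w ≠ u →
      (t w ≠ some Sym.neg ∧ ∀ j', t w = some (Sym.pri j') → j ≤ j')

/-- `w` is a `⪯`-minimal active position above `u` (an element of `suk_u(Σ)`). -/
def Suk (t : Label) (i k : ℕ) (P : Bool) (S : List ℕ → Prop) (u w : List ℕ) : Prop :=
  Active t i k P S w ∧ u <+: w ∧
    ∀ w', Active t i k P S w' → u <+: w' → w' <+: w → w' = w

/-- The relation `u ≫ w` associated with the strategy `S`. -/
def Gg (t : Label) (i k : ℕ) (P : Bool) (S : List ℕ → Prop) (u w : List ℕ) : Prop :=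
  S u ∧ S w ∧ u <+: w ∧ u ≠ w ∧
    ∃ w', Active t i k P S w' ∧ u <+: w' ∧ w' <+: w

/-- Lexicographic strict order on `P`-signatures (tuples of ordinals indexed by
the `P`-losing priorities; smaller indices are more significant). -/
def sigLt (i k : ℕ) (P : Bool) (σ τ : ℕ → Ordinal) : Prop :=
  ∃ j, PLosing i k P j ∧ σ j < τ j ∧
    ∀ j', PLosing i k P j' → j' < j → σ j' = τ j'

/-- Equality of `P`-signatures (on the relevant coordinates). -/
def sigEq (i k : ℕ) (P : Bool) (σ τ : ℕ → Ordinal) : Prop :=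
  ∀ j, PLosing i k P j → σ j = τ j

/-- Lexicographic order on `P`-signatures. -/
def sigLe (i k : ℕ) (P : Bool) (σ τ : ℕ → Ordinal) : Prop :=
  sigLt i k P σ τ ∨ sigEq i k P σ τ

/-- Lexicographic strict order on prefixes `σ↾ℓ` of `P`-signatures. -/
def sigLtBelow (i k : ℕ) (P : Bool) (ℓ : ℕ) (σ τ : ℕ → Ordinal) : Prop :=
  ∃ j, PLosing i k P j ∧ j ≤ ℓ ∧ σ j < τ j ∧
    ∀ j', PLosing i k P j' → j' < j → σ j' = τ j'

/-- Equality of the prefixes `σ↾ℓ`. -/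
def sigEqBelow (i k : ℕ) (P : Bool) (ℓ : ℕ) (σ τ : ℕ → Ordinal) : Prop :=
  ∀ j, PLosing i k P j → j ≤ ℓ → σ j = τ j

/-- Lexicographic order on the prefixes `σ↾ℓ`. -/
def sigLeBelow (i k : ℕ) (P : Bool) (ℓ : ℕ) (σ τ : ℕ → Ordinal) : Prop :=
  sigLtBelow i k P ℓ σ τ ∨ sigEqBelow i k P ℓ σ τ

/-- Order on signatures extended by `∞` (represented by `none`) as maximum. -/
def extLe (i k : ℕ) (P : Bool) : Option (ℕ → Ordinal) → Option (ℕ → Ordinal) → Prop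
  | _, none => True
  | none, some _ => False
  | some σ, some τ => sigLe i k P σ τ

/-- Equality of signatures extended by `∞`. -/
def extEq (i k : ℕ) (P : Bool) : Option (ℕ → Ordinal) → Option (ℕ → Ordinal) → Prop
  | none, none => True
  | some σ, some τ => sigEq i k P σ τ
  | _, _ => False

/-- Order on prefixes `σ↾ℓ` of signatures extended by `∞`. -/
def extLeBelow (i k : ℕ) (P : Bool) (ℓ : ℕ) :
    Option (ℕ → Ordinal) → Option (ℕ → Ordinal) → Prop
  | _, none => True
  | none, some _ => False
  | some σ, some τ => sigLeBelow i k P ℓ σ τ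

/-- Strict order on prefixes `σ↾ℓ` of signatures extended by `∞`. -/
def extLtBelow (i k : ℕ) (P : Bool) (ℓ : ℕ) :
    Option (ℕ → Ordinal) → Option (ℕ → Ordinal) → Prop
  | none, _ => False
  | some _, none => True
  | some σ, some τ => sigLtBelow i k P ℓ σ τ

/-- `s` is the signature assignment `s(·,Σ)` of the strategy `S`: at an active
node with priority `j`, the coordinate `j` of the child's value is incremented
by one and the later coordinates are zeroed; at a non-active node of `S`, the
value is the least upper bound (in the lexicographic order) of the values at
the `⪯`-minimal active descendants. -/
def SigDef (t : Label) (i k : ℕ) (P : Bool) (S : List ℕ → Prop)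
    (s : List ℕ → ℕ → Ordinal) : Prop :=
  (∀ u j, Active t i k P S u → t u = some (Sym.pri j) →
    ∀ j', PLosing i k P j' →
      (j' < j → s u j' = s (u ++ [0]) j') ∧
      (j' = j → s u j' = s (u ++ [0]) j + 1) ∧
      (j < j' → s u j' = 0)) ∧
  (∀ u, S u → ¬ Active t i k P S u →
    (∀ w, Suk t i k P S u w → sigLe i k P (s w) (s u)) ∧
    (∀ τ, (∀ w, Suk t i k P S u w → sigLe i k P (s w) τ) → sigLe i k P (s u) τ))

/-- The subtree of `t` rooted at `u`. -/
def subtree (t : Label) (u : List ℕ) : Label := fun w => t (u ++ w)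

/-- The tree with a unary root symbol `s` and subtree `t`. -/
def node1 (s : Sym) (t : Label) : Label := fun u =>
  match u with
  | [] => some s
  | 0 :: w => t w
  | _ => none

/-- The tree with root the binary choice symbol of player `b` and the given
left and right subtrees. -/
def node2 (b : Bool) (tL tR : Label) : Label := fun u =>
  match u with
  | [] => some (Sym.choice b)
  | 0 :: w => tL w
  | 1 :: w => tR w
  | _ => none

/-- `σ` is the value `s(ε,Σ)` of some winning strategy `Σ` of `P` in `G(t)`. -/
def ValOf (t : Label) (i k : ℕ) (P : Bool) (σ : ℕ → Ordinal) : Prop :=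
  ∃ (S : List ℕ → Prop) (s : List ℕ → ℕ → Ordinal),
    IsWinningStrategy t P S ∧ SigDef t i k P S s ∧ sigEq i k P σ (s [])

/-- `σ` is the signature `σ_P(t)`: the lexicographic infimum (= minimum) of the
values of the winning strategies of `P` in `G(t)`. -/
def IsSigOf (t : Label) (i k : ℕ) (P : Bool) (σ : ℕ → Ordinal) : Prop :=
  ValOf t i k P σ ∧ ∀ τ, ValOf t i k P τ → sigLe i k P σ τ

/-- `a` is the extended signature `σ_P(t)`, with `none` representing `∞`
(no winning strategy of `P` exists). -/
def IsExtSigOf (t : Label) (i k : ℕ) (P : Bool) : Option (ℕ → Ordinal) → Prop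
  | none => ¬ ∃ S : List ℕ → Prop, IsWinningStrategy t P S
  | some σ => IsSigOf t i k P σ

/-- The six invariants of the signature lemma for a pair of assignments
`σ' : Bool → Label → Option (ℕ → Ordinal)` (with `none` playing the role of
`∞`): (1) `σ'_P(t) = ∞` iff `P` loses `G(t)`; (2) `σ'_P(~(t)) = (0,…,0)` if `P`
wins `G(~(t))`; (3) prepending a `P`-winning priority `j` keeps the coordinates
below `j` and zeroes the ones `≥ j`; (4) prepending a `P`-losing priority `j`
increments coordinate `j` and zeroes the later ones; (5) the min rule at `P`'s
choice nodes; (6) the max rule at the opponent's choice nodes. -/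
def SigInvariants (i k : ℕ) (σ' : Bool → Label → Option (ℕ → Ordinal)) : Prop :=
  (∀ (P : Bool) (t : Label), GoodTree t i k →
    (σ' P t = none ↔ ¬ ∃ S : List ℕ → Prop, IsWinningStrategy t P S)) ∧
  (∀ (P : Bool) (t : Label), GoodTree t i k →
    (∃ S : List ℕ → Prop, IsWinningStrategy (node1 Sym.neg t) P S) →
    ∃ τ, σ' P (node1 Sym.neg t) = some τ ∧ ∀ j, PLosing i k P j → τ j = 0) ∧
  (∀ (P : Bool) (t : Label) (j : ℕ) (τ : ℕ → Ordinal), GoodTree t i k →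
    PWinning i k P j → σ' P t = some τ →
    ∃ τ', σ' P (node1 (Sym.pri j) t) = some τ' ∧ ∀ j', PLosing i k P j' →
      (j' < j → τ' j' = τ j') ∧ (j ≤ j' → τ' j' = 0)) ∧
  (∀ (P : Bool) (t : Label) (j : ℕ) (τ : ℕ → Ordinal), GoodTree t i k →
    PLosing i k P j → σ' P t = some τ →
    ∃ τ', σ' P (node1 (Sym.pri j) t) = some τ' ∧ ∀ j', PLosing i k P j' →
      (j' < j → τ' j' = τ j') ∧ (j' = j → τ' j' = τ j + 1) ∧ (j < j' → τ' j' = 0)) ∧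
  (∀ (P : Bool) (tL tR : Label), GoodTree tL i k → GoodTree tR i k →
    (extLe i k P (σ' P tL) (σ' P tR) →
      extEq i k P (σ' P (node2 P tL tR)) (σ' P tL)) ∧
    (extLe i k P (σ' P tR) (σ' P tL) →
      extEq i k P (σ' P (node2 P tL tR)) (σ' P tR))) ∧
  (∀ (P : Bool) (tL tR : Label), GoodTree tL i k → GoodTree tR i k →
    (extLe i k P (σ' P tL) (σ' P tR) →
      extEq i k P (σ' P (node2 (!P) tL tR)) (σ' P tR)) ∧
    (extLe i k P (σ' P tR) (σ' P tL) →
      extEq i k P (σ' P (node2 (!P) tL tR)) (σ' P tL)))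

/-- `S` is a `σ'`-optimal strategy of `P` in `G(t)`: at each position controlled
by `P` it moves to a subtree of lexicographically minimal `σ'`-value for the
appropriate player (depending on whether the position is kept or switched). -/
def IsOptimal (t : Label) (i k : ℕ) (P : Bool)
    (σ' : Bool → Label → Option (ℕ → Ordinal)) (S : List ℕ → Prop) : Prop :=
  IsStrategy t P S ∧
  ∀ u (d : ℕ), S u → ctrl t u = some P → S (u ++ [d]) →
    ∀ d' : ℕ, t (u ++ [d']) ≠ none →
      extLe i k (if kept t u then P else !P)
        (σ' (if kept t u then P else !P) (subtree t (u ++ [d])))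
        (σ' (if kept t u then P else !P) (subtree t (u ++ [d'])))

/-- A partial strategy of `P`: a `P`-deterministic behaviour (nonempty,
prefix-closed, without maximal elements, deterministic at `P`'s positions). -/
def IsPartialStrategy (t : Label) (P : Bool) (S : List ℕ → Prop) : Prop :=
  S [] ∧
  (∀ u, S u → t u ≠ none) ∧
  (∀ u (d : ℕ), S (u ++ [d]) → S u) ∧
  (∀ u, S u → ctrl t u = some P → ∃! d : ℕ, S (u ++ [d])) ∧
  (∀ u, S u → ∃ d : ℕ, S (u ++ [d]))

/-- The position `u` is not reachable by the partial strategy `S` of `P`: it is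
a child, outside `S`, of an opponent position of `S`. -/
def NotReachable (t : Label) (P : Bool) (S : List ℕ → Prop) (u : List ℕ) : Prop :=
  ∃ (w : List ℕ) (d : ℕ), u = w ++ [d] ∧ S w ∧ ¬ S u ∧ t u ≠ none ∧ ctrl t w = some (!P)

/-- `w ∈ act_u(Σ,j)`: an active position above `u` with priority at most `j`. -/
def ActJ (t : Label) (i k : ℕ) (P : Bool) (S : List ℕ → Prop)
    (u : List ℕ) (j : ℕ) (w : List ℕ) : Prop :=
  Active t i k P S w ∧ u <+: w ∧ ∃ j', t w = some (Sym.pri j') ∧ j' ≤ j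


/-! ### Auxiliary lemmas -/

section Aux

variable {i k : ℕ} {P : Bool}

lemma plos_gap {j j' : ℕ} (hj : PLosing i k P j) (hj' : PLosing i k P j')
    (h : j < j') : j + 2 ≤ j' := by
  have h1 : Odd j ↔ Odd j' := hj.2.2.trans hj'.2.2.symm
  rw [Nat.odd_iff, Nat.odd_iff] at h1
  omega

lemma plos_succ2 {j : ℕ} (hj : PLosing i k P j) (h : j + 2 ≤ k) :
    PLosing i k P (j + 2) := by
  refine ⟨by have := hj.1; omega, h, ?_⟩
  have h2 : Odd (j + 2) ↔ Odd j := by rw [Nat.odd_iff, Nat.odd_iff]; omega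
  exact h2.trans hj.2.2

variable {σ τ ρ : ℕ → Ordinal} {j : ℕ}

lemma sigEqBelow_refl : sigEqBelow i k P j σ σ := fun _ _ _ => rfl

lemma sigLeBelow_refl : sigLeBelow i k P j σ σ := Or.inr sigEqBelow_refl

lemma sigEqBelow_symm (h : sigEqBelow i k P j σ τ) : sigEqBelow i k P j τ σ :=
  fun a b c => (h a b c).symm

lemma sigEqBelow_trans (h1 : sigEqBelow i k P j σ τ) (h2 : sigEqBelow i k P j τ ρ) :
    sigEqBelow i k P j σ ρ := fun a b c => (h1 a b c).trans (h2 a b c)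

lemma sigLtBelow_of_lt_eq (h1 : sigLtBelow i k P j σ τ) (h2 : sigEqBelow i k P j τ ρ) :
    sigLtBelow i k P j σ ρ := by
  obtain ⟨m, hm, hmj, hlt, hb⟩ := h1
  exact ⟨m, hm, hmj, hlt.trans_eq (h2 m hm hmj),
    fun m' hm' hlt' => (hb m' hm' hlt').trans (h2 m' hm' (le_trans hlt'.le hmj))⟩

lemma sigLtBelow_of_eq_lt (h1 : sigEqBelow i k P j σ τ) (h2 : sigLtBelow i k P j τ ρ) :
    sigLtBelow i k P j σ ρ := by
  obtain ⟨m, hm, hmj, hlt, hb⟩ := h2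
  exact ⟨m, hm, hmj, (h1 m hm hmj).trans_lt hlt,
    fun m' hm' hlt' => (h1 m' hm' (le_trans hlt'.le hmj)).trans (hb m' hm' hlt')⟩

lemma sigLtBelow_trans (h1 : sigLtBelow i k P j σ τ) (h2 : sigLtBelow i k P j τ ρ) :
    sigLtBelow i k P j σ ρ := by
  obtain ⟨m1, hm1, hj1, hlt1, hb1⟩ := h1
  obtain ⟨m2, hm2, hj2, hlt2, hb2⟩ := h2
  rcases lt_trichotomy m1 m2 with h | h | h
  · exact ⟨m1, hm1, hj1, hlt1.trans_eq (hb2 m1 hm1 h),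
      fun m' hm' h' => (hb1 m' hm' h').trans (hb2 m' hm' (h'.trans h))⟩
  · subst h
    exact ⟨m1, hm1, hj1, hlt1.trans hlt2,
      fun m' hm' h' => (hb1 m' hm' h').trans (hb2 m' hm' h')⟩
  · exact ⟨m2, hm2, hj2, (hb1 m2 hm2 h).trans_lt hlt2,
      fun m' hm' h' => (hb1 m' hm' (h'.trans h)).trans (hb2 m' hm' h')⟩

lemma sigLtBelow_of_le_lt (h1 : sigLeBelow i k P j σ τ) (h2 : sigLtBelow i k P j τ ρ) :
    sigLtBelow i k P j σ ρ := by
  rcases h1 with h | h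
  exacts [sigLtBelow_trans h h2, sigLtBelow_of_eq_lt h h2]

lemma sigLeBelow_of_le_le (h1 : sigLeBelow i k P j σ τ) (h2 : sigLeBelow i k P j τ ρ) :
    sigLeBelow i k P j σ ρ := by
  rcases h1 with h1 | h1 <;> rcases h2 with h2 | h2
  · exact Or.inl (sigLtBelow_trans h1 h2)
  · exact Or.inl (sigLtBelow_of_lt_eq h1 h2)
  · exact Or.inl (sigLtBelow_of_eq_lt h1 h2)
  · exact Or.inr (sigEqBelow_trans h1 h2)

lemma sigLeBelow_of_sigLe (h : sigLe i k P σ τ) : sigLeBelow i k P j σ τ := by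
  rcases h with ⟨m, hm, hlt, hb⟩ | h
  · rcases le_or_gt m j with hmj | hmj
    · exact Or.inl ⟨m, hm, hmj, hlt, hb⟩
    · exact Or.inr fun m' hm' h' => hb m' hm' (lt_of_le_of_lt h' hmj)
  · exact Or.inr fun m' hm' _ => h m' hm'

lemma sigLe_tail {Ω : Ordinal} (hj : PLosing i k P j) (hb : sigLeBelow i k P j σ τ)
    (hΩ : ∀ m, σ m < Ω) :
    sigLe i k P σ (fun m => if m ≤ j then τ m else Ω) := by
  rcases hb with ⟨m, hm, hmj, hlt, hbel⟩ | heq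
  · refine Or.inl ⟨m, hm, ?_, ?_⟩
    · simpa only [if_pos hmj] using hlt
    · intro m' hm' h'
      simpa only [if_pos (le_trans h'.le hmj)] using hbel m' hm' h'
  · by_cases hk : j + 2 ≤ k
    · refine Or.inl ⟨j + 2, plos_succ2 hj hk, ?_, ?_⟩
      · simpa only [if_neg (by omega : ¬ j + 2 ≤ j)] using hΩ (j + 2)
      · intro m' hm' h'
        have hm'j : m' ≤ j := by
          by_contra hc
          have := plos_gap hj hm' (by omega)
          omega
        simpa only [if_pos hm'j] using heq m' hm' hm'j
    · refine Or.inr fun m hm => ?_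
      have hmj : m ≤ j := by
        by_contra hc
        have h1 := plos_gap hj hm (by omega)
        have h2 := hm.2.1
        omega
      simpa only [if_pos hmj] using heq m hm hmj

lemma sigLeBelow_of_tail {Ω : Ordinal}
    (h : sigLe i k P σ (fun m => if m ≤ j then τ m else Ω)) :
    sigLeBelow i k P j σ τ := by
  rcases h with ⟨m, hm, hlt, hbel⟩ | heq
  · rcases le_or_gt m j with hmj | hmj
    · refine Or.inl ⟨m, hm, hmj, ?_, ?_⟩
      · simpa only [if_pos hmj] using hlt
      · intro m' hm' h'
        simpa only [if_pos (le_trans h'.le hmj)] using hbel m' hm' h'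
    · refine Or.inr fun m' hm' h' => ?_
      simpa only [if_pos h'] using hbel m' hm' (lt_of_le_of_lt h' hmj)
  · refine Or.inr fun m' hm' h' => ?_
    simpa only [if_pos h'] using heq m' hm'

lemma mem_of_prefix {S : List ℕ → Prop} (hclose : ∀ u (d : ℕ), S (u ++ [d]) → S u)
    {w v : List ℕ} (hw : S w) (hvw : v <+: w) : S v := by
  obtain ⟨r, rfl⟩ := hvw
  induction r using List.reverseRecOn with
  | nil => simpa using hw
  | append_singleton r d ih =>
    exact ih (hclose (v ++ r) d (by simpa [List.append_assoc] using hw))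

lemma exists_suk {t : Label} {i k : ℕ} {P : Bool} {S : List ℕ → Prop} {u w : List ℕ}
    (h : ∃ v, Active t i k P S v ∧ u <+: v ∧ v <+: w) :
    ∃ v, Suk t i k P S u v ∧ v <+: w := by
  classical
  obtain ⟨v0, hv0⟩ := h
  have hQ : ∃ n, ∃ v, (Active t i k P S v ∧ u <+: v ∧ v <+: w) ∧ v.length = n :=
    ⟨v0.length, v0, hv0, rfl⟩
  obtain ⟨v, ⟨hva, hvu, hvw⟩, hvlen⟩ := Nat.find_spec hQ
  refine ⟨v, ⟨hva, hvu, ?_⟩, hvw⟩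
  intro w' hw'a hw'u hw'v
  have h1 : Nat.find hQ ≤ w'.length :=
    Nat.find_min' hQ ⟨w', ⟨hw'a, hw'u, hw'v.trans hvw⟩, rfl⟩
  exact hw'v.eq_of_length (le_antisymm hw'v.length_le (by rw [hvlen]; exact h1))

lemma pref_length (α : ℕ → ℕ) (n : ℕ) : (pref α n).length = n := by simp [pref]

lemma pref_take (α : ℕ → ℕ) {a b : ℕ} (h : a ≤ b) : (pref α b).take a = pref α a := by
  unfold pref
  rw [← List.map_take, List.take_range, Nat.min_eq_left h]

lemma pref_mono (α : ℕ → ℕ) {a b : ℕ} (h : a ≤ b) : pref α a <+: pref α b := by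
  rw [← pref_take α h]; exact List.take_prefix _ _

lemma pref_succ (α : ℕ → ℕ) (n : ℕ) : pref α (n + 1) = pref α n ++ [α n] := by
  simp [pref, List.range_succ]

lemma pref_ne (α : ℕ → ℕ) {a b : ℕ} (h : a ≠ b) : pref α a ≠ pref α b := fun hc =>
  h (by simpa [pref_length] using congrArg List.length hc)

lemma gg_wf {t : Label} {i k : ℕ} {P : Bool} {S : List ℕ → Prop}
    (ht : IsTree t i k) (hS : IsWinningStrategy t P S) :
    WellFounded (fun x y : List ℕ => Gg t i k P S y x) := by
  classical
  obtain ⟨⟨hroot, hdom, hclose, hdet, hfull⟩, hwin⟩ := hS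
  have hcomp : ∀ {a b c : List ℕ}, Gg t i k P S a b → Gg t i k P S b c → Gg t i k P S a c := by
    rintro a b c ⟨hSa, hSb, hab, hne, w', hw'⟩ ⟨_, hSc, hbc, hne', _⟩
    refine ⟨hSa, hSc, hab.trans hbc, ?_, w', hw'.1, hw'.2.1, hw'.2.2.trans hbc⟩
    intro h
    have l1 : a.length < b.length :=
      lt_of_le_of_ne hab.length_le fun hl => hne (hab.eq_of_length hl)
    have l2 : b.length ≤ c.length := hbc.length_le
    have := congrArg List.length h
    omega
  haveI : IsIrrefl (List ℕ) (fun x y : List ℕ => Gg t i k P S y x) :=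
    ⟨fun a h => h.2.2.2.1 rfl⟩
  haveI : IsTrans (List ℕ) (fun x y : List ℕ => Gg t i k P S y x) :=
    ⟨fun _ _ _ hab hbc => hcomp hbc hab⟩
  haveI : IsStrictOrder (List ℕ) (fun x y : List ℕ => Gg t i k P S y x) := ⟨⟩
  rw [RelEmbedding.wellFounded_iff_isEmpty]
  constructor
  intro g
  have hGg : ∀ n, Gg t i k P S (g n) (g (n + 1)) :=
    fun n => g.map_rel_iff.mpr (Nat.lt_succ_self n)
  set f : ℕ → List ℕ := fun n => g n with hf
  have hpre : ∀ n, f n <+: f (n + 1) := fun n => (hGg n).2.2.1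
  have hneq : ∀ n, f n ≠ f (n + 1) := fun n => (hGg n).2.2.2.1
  have hSf : ∀ n, S (f n) := fun n => (hGg n).1
  have hlen : ∀ n, (f n).length < (f (n + 1)).length := fun n =>
    lt_of_le_of_ne (hpre n).length_le fun h => hneq n ((hpre n).eq_of_length h)
  have hmono : ∀ a b : ℕ, a ≤ b → f a <+: f b := by
    intro a b h
    induction b, h using Nat.le_induction with
    | base => exact List.prefix_refl _
    | succ b hb ih => exact ih.trans (hpre b)
  have hlen_ge : ∀ n, n ≤ (f n).length := by
    intro n
    induction n with
    | zero => exact Nat.zero_le _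
    | succ n ih => have := hlen n; omega
  set α : ℕ → ℕ := fun n => (f (n + 1)).getD n 0 with hα
  have hkey : ∀ n m, n ≤ (f m).length → pref α n = (f m).take n := by
    intro n
    induction n with
    | zero => intro m _; simp [pref]
    | succ n ih =>
      intro m hm
      have h1 : n ≤ (f m).length := by omega
      have hnm : n < (f m).length := by omega
      have hn1 : n < (f (n + 1)).length := lt_of_lt_of_le (Nat.lt_succ_self n) (hlen_ge (n + 1))
      have hαn : α n = (f m)[n] := by
        rcases le_total (n + 1) m with h2 | h2
        · have hp := hmono _ _ h2
          simp only [hα]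
          rw [List.getD_eq_getElem _ _ hn1]
          exact hp.getElem hn1
        · have hp := hmono _ _ h2
          simp only [hα]
          rw [List.getD_eq_getElem _ _ hn1]
          exact (hp.getElem hnm).symm
      rw [pref_succ, ih m h1, hαn, List.take_succ, List.getElem?_eq_getElem hnm]
      simp
  have hSpref : ∀ n, S (pref α n) := by
    intro n
    rw [hkey n n (hlen_ge n)]
    exact mem_of_prefix hclose (hSf n) (List.take_prefix _ _)
  obtain ⟨jstar, hinf, hminstar, hpar⟩ := hwin α hSpref
  have hact : ∀ n, ∃ m, n ≤ m ∧ Active t i k P S (pref α m) := by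
    intro n
    obtain ⟨w, hw, h1, h2⟩ := (hGg n).2.2.2.2
    refine ⟨w.length, le_trans (le_trans (hlen_ge n) h1.length_le) (le_refl _), ?_⟩
    have hww : pref α w.length = w := by
      rw [hkey w.length (n + 1) h2.length_le]
      exact (List.prefix_iff_eq_take.mp h2).symm
    rwa [hww]
  have hexp : ∃ p, ∃ m, Active t i k P S (pref α m) ∧ t (pref α m) = some (Sym.pri p) := by
    obtain ⟨m, -, hm⟩ := hact 0
    have hp := hm.2
    obtain ⟨p, hp1, -⟩ := hp
    exact ⟨p, m, hm, hp1⟩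
  obtain ⟨m₀, hm₀act, hm₀pri⟩ := Nat.find_spec hexp
  have hmin' : ∀ m p, Active t i k P S (pref α m) → t (pref α m) = some (Sym.pri p) →
      Nat.find hexp ≤ p := fun m p h1 h2 => Nat.find_min' hexp ⟨m, h1, h2⟩
  have hnoneg : ∀ n, t (pref α n) ≠ some Sym.neg := by
    intro n
    obtain ⟨m, hm1, hm2⟩ := hact (n + 1)
    obtain ⟨hSm, p, hp, hplos, hanc⟩ := hm2
    exact (hanc _ (pref_mono α (by omega)) (pref_ne α (by omega))).1
  have hkept : ∀ n, kept t (pref α n) := by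
    intro n
    have hzero : tildeCount t (pref α n) = 0 := by
      unfold tildeCount
      rw [pref_length, List.countP_eq_zero]
      intro a ha
      rw [List.mem_range] at ha
      rw [pref_take α ha.le]
      simp [hnoneg a]
    unfold kept
    rw [hzero]
  have hge : ∀ n p, t (pref α n) = some (Sym.pri p) → Nat.find hexp ≤ p := by
    intro n p hp
    obtain ⟨m, hm1, hm2⟩ := hact (n + 1)
    obtain ⟨hSm, q, hq, hqlos, hanc⟩ := hm2
    have hq' : q ≤ p := (hanc _ (pref_mono α (by omega)) (pref_ne α (by omega))).2 p hp
    exact le_trans (hmin' m q ⟨hSm, q, hq, hqlos, hanc⟩ hq) hq'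
  have hstab : ∀ N, ∃ m, N ≤ m ∧ effPri t (pref α m) = some (Nat.find hexp) := by
    intro N
    obtain ⟨m, hm1, hm2⟩ := hact (max N (m₀ + 1))
    obtain ⟨hSm, q, hq, hqlos, hanc⟩ := hm2
    have hm0m : m₀ < m := by have := le_trans (le_max_right N (m₀ + 1)) hm1; omega
    have hqle : q ≤ Nat.find hexp :=
      (hanc _ (pref_mono α (by omega)) (pref_ne α (by omega))).2 _ hm₀pri
    have hqeq : q = Nat.find hexp :=
      le_antisymm hqle (hmin' m q ⟨hSm, q, hq, hqlos, hanc⟩ hq)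
    refine ⟨m, le_trans (le_max_left N (m₀ + 1)) hm1, ?_⟩
    unfold effPri
    rw [hq]
    simp [hkept m, hqeq]
  have hinfj : InfOften t α (Nat.find hexp) := by
    apply Set.infinite_of_not_bddAbove
    rw [not_bddAbove_iff]
    intro x
    obtain ⟨m, hm1, hm2⟩ := hstab (x + 1)
    exact ⟨m, hm2, by omega⟩
  have hepge : ∀ n p, effPri t (pref α n) = some p → Nat.find hexp ≤ p := by
    intro n p hp
    unfold effPri at hp
    cases hc : t (pref α n) with
    | none => rw [hc] at hp; cases hp
    | some s =>
      cases s with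
      | pri q =>
        rw [hc] at hp
        simp only [if_pos (hkept n), Option.some.injEq] at hp
        subst hp
        exact hge n q hc
      | choice b => rw [hc] at hp; cases hp
      | neg => rw [hc] at hp; cases hp
  have h1 : Nat.find hexp ≤ jstar := by
    obtain ⟨n, hn⟩ := hinf.nonempty
    exact hepge n jstar hn
  have h2 : ¬ Nat.find hexp < jstar := fun hc => hminstar _ hc hinfj
  have hjeq : jstar = Nat.find hexp := by omega
  obtain ⟨_, q, hq, hqlos, _⟩ := hm₀act
  have hqj : q = Nat.find hexp := by
    have := hm₀pri.symm.trans hq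
    simp only [Option.some.injEq, Sym.pri.injEq] at this
    omega
  have hodd := hqlos.2.2
  rw [hqj, Nat.odd_iff] at hodd
  rw [hjeq, Nat.even_iff] at hpar
  by_cases hPt : P = true
  · have a1 := hodd.mpr hPt
    have a2 := hpar.mpr hPt
    omega
  · have a1 : ¬ Nat.find hexp % 2 = 1 := fun h => hPt (hodd.mp h)
    have a2 : ¬ Nat.find hexp % 2 = 0 := fun h => hPt (hpar.mp h)
    omega

end Aux

/-- Signature restriction via active positions: for `u ∈ Σ` and a `P`-losing
number `j`, the prefix `s(u,Σ)↾j` is the lexicographic supremum (least upper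
bound) of the prefixes `s(w,Σ)↾j` over all `w ∈ act_u(Σ,j)`. -/
theorem sig_prefix_is_sup_of_active (t : Label) (i k : ℕ) (P : Bool)
    (S : List ℕ → Prop) (s : List ℕ → ℕ → Ordinal) (u : List ℕ) (j : ℕ)
    (ht : IsTree t i k) (hwf : WellFormed t)
    (hS : IsWinningStrategy t P S)
    (hs : SigDef t i k P S s)
    (hu : S u) (hj : PLosing i k P j) :
    (∀ w, ActJ t i k P S u j w → sigLeBelow i k P j (s w) (s u)) ∧
    (∀ τ : ℕ → Ordinal,
      (∀ w, ActJ t i k P S u j w → sigLeBelow i k P j (s w) τ) →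
      sigLeBelow i k P j (s u) τ) := by
  classical
  have hclose := hS.1.2.2.1
  have hdom := hS.1.2.1
  have hfull := hS.1.2.2.2.2
  have hwf' : WellFounded (fun x y : List ℕ => Gg t i k P S y x) := gg_wf ht hS
  refine (hwf'.induction (C := fun v => S v →
      (∀ w, ActJ t i k P S v j w → sigLeBelow i k P j (s w) (s v)) ∧
      (∀ τ : ℕ → Ordinal,
        (∀ w, ActJ t i k P S v j w → sigLeBelow i k P j (s w) τ) →
        sigLeBelow i k P j (s v) τ)) u ?_) hu
  intro v IH hv
  by_cases hact : Active t i k P S v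
  · obtain ⟨hSv, j₀, htv, hj₀, hanc⟩ := hact
    have hactv : Active t i k P S v := ⟨hSv, j₀, htv, hj₀, hanc⟩
    have hctrl : ctrl t v ≠ some P := by simp [ctrl, htv]
    have htv0 : t (v ++ [0]) ≠ none := (ht.2.1 v _ htv 0).mpr (by simp [Sym.arity])
    have hSv0 : S (v ++ [0]) := hfull v 0 hv hctrl htv0
    have hvne : v ≠ v ++ [0] := by simp
    have hGg0 : Gg t i k P S v (v ++ [0]) :=
      ⟨hv, hSv0, ⟨[0], rfl⟩, hvne, v, hactv, List.prefix_refl v, ⟨[0], rfl⟩⟩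
    obtain ⟨IHA, IHB⟩ := IH (v ++ [0]) hGg0 hSv0
    have hrel := hs.1 v j₀ hactv htv
    have hchild : ∀ w, S w → v <+: w → v ≠ w → (v ++ [0]) <+: w := by
      intro w hSw hpw hne
      obtain ⟨r, rfl⟩ := hpw
      cases r with
      | nil => simp at hne
      | cons d r' =>
        have hp1 : v ++ [d] <+: v ++ d :: r' := ⟨r', by simp⟩
        have hSd : S (v ++ [d]) := mem_of_prefix hclose hSw hp1
        have hd : d < (Sym.pri j₀).arity := (ht.2.1 v _ htv d).mp (hdom _ hSd)
        have hd0 : d = 0 := by simpa [Sym.arity] using hd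
        subst hd0
        exact hp1
    by_cases hcj : j₀ ≤ j
    · constructor
      · intro w hw
        obtain ⟨hwact, hvw, j', htw', hj'⟩ := hw
        by_cases hwv : v = w
        · subst hwv; exact sigLeBelow_refl
        · have h1 : sigLeBelow i k P j (s w) (s (v ++ [0])) :=
            IHA w ⟨hwact, hchild w hwact.1 hvw hwv, j', htw', hj'⟩
          have h2 : sigLtBelow i k P j (s (v ++ [0])) (s v) := by
            refine ⟨j₀, hj₀, hcj, ?_, ?_⟩
            · rw [(hrel j₀ hj₀).2.1 rfl, Ordinal.add_one_eq_succ]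
              exact Order.lt_succ _
            · intro m' hm' hlt'
              exact ((hrel m' hm').1 hlt').symm
          exact Or.inl (sigLtBelow_of_le_lt h1 h2)
      · intro τ hb
        exact hb v ⟨hactv, List.prefix_refl v, j₀, htv, hcj⟩
    · push_neg at hcj
      have heq0 : sigEqBelow i k P j (s v) (s (v ++ [0])) := fun m hm hmj =>
        (hrel m hm).1 (lt_of_le_of_lt hmj hcj)
      constructor
      · intro w hw
        obtain ⟨hwact, hvw, j', htw', hj'⟩ := hw
        have hwv : v ≠ w := by
          intro h
          subst h
          have := htv.symm.trans htw'
          simp only [Option.some.injEq, Sym.pri.injEq] at this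
          omega
        have h1 := IHA w ⟨hwact, hchild w hwact.1 hvw hwv, j', htw', hj'⟩
        exact sigLeBelow_of_le_le h1 (Or.inr (sigEqBelow_symm heq0))
      · intro τ hb
        have hres := IHB τ fun w hw =>
          hb w ⟨hw.1, (List.prefix_append v [0]).trans hw.2.1, hw.2.2⟩
        exact sigLeBelow_of_le_le (Or.inr heq0) hres
  · have hnot2 := hs.2 v hv hact
    constructor
    · intro w hw
      obtain ⟨hwact, hvw, j', htw', hj'⟩ := hw
      obtain ⟨w₁, hsuk, hw₁w⟩ := exists_suk ⟨w, hwact, hvw, List.prefix_refl w⟩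
      have h1 : sigLeBelow i k P j (s w₁) (s v) := sigLeBelow_of_sigLe (hnot2.1 w₁ hsuk)
      by_cases hww : w₁ = w
      · subst hww; exact h1
      · have hvw₁ : v ≠ w₁ := fun h => hact (h ▸ hsuk.1)
        have hGg1 : Gg t i k P S v w₁ :=
          ⟨hv, hsuk.1.1, hsuk.2.1, hvw₁, w₁, hsuk.1, hsuk.2.1, List.prefix_refl w₁⟩
        have h2 := (IH w₁ hGg1 hsuk.1.1).1 w ⟨hwact, hw₁w, j', htw', hj'⟩
        exact sigLeBelow_of_le_le h2 h1
    · intro τ hb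
      set Ω : Ordinal :=
        Order.succ (⨆ p : {w : List ℕ // Suk t i k P S v w} × ℕ, s p.1.1 p.2) with hΩdef
      have hΩ : ∀ w, Suk t i k P S v w → ∀ m, s w m < Ω := by
        intro w hw m
        rw [hΩdef, Order.lt_succ_iff]
        exact le_ciSup (f := fun p : {w : List ℕ // Suk t i k P S v w} × ℕ => s p.1.1 p.2)
          (Ordinal.bddAbove_range _) ⟨⟨w, hw⟩, m⟩
      have hub : ∀ w, Suk t i k P S v w → sigLeBelow i k P j (s w) τ := by
        intro w hw
        obtain ⟨⟨hSw, jw, htw, hjw, hancw⟩, hvw, hmin⟩ := hw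
        have hwact : Active t i k P S w := ⟨hSw, jw, htw, hjw, hancw⟩
        by_cases hjj : jw ≤ j
        · exact hb w ⟨hwact, hvw, jw, htw, hjj⟩
        · have hvww : v ≠ w := fun h => hact (h ▸ hwact)
          have hGgw : Gg t i k P S v w :=
            ⟨hv, hSw, hvw, hvww, w, hwact, hvw, List.prefix_refl w⟩
          exact (IH w hGgw hSw).2 τ fun x hx => hb x ⟨hx.1, hvw.trans hx.2.1, hx.2.2⟩
      have hle := hnot2.2 (fun m => if m ≤ j then τ m else Ω)
        (fun w hw => sigLe_tail hj (hub w hw) (hΩ w hw))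
      exact sigLeBelow_of_tail hle


end UnambSig
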